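/- Let M be the block matrix [[P, 0],[Q, R]] where P ∈ ℝ^{p₁×q₁}, Q ∈ ℝ^{p₂×q₁}, R ∈ ℝ^{p₂×q₂} are nonnegative matrices. Then rank_psd(M) ≥ rank_psd(P) + rank_psd(R). -/

import Mathlib

/-!
Take a psd factorization `A`, `B` of `[[P, 0], [Q, R]]` of minimal size `k`. For psd matrices
`tr (X * Y) = 0` forces `X * Y = 0`, so the zero block makes every row factor of `P` annihilate
every column factor of `R`. Hence the span `s₁` of the ranges of the former is orthogonal to the
span `s₂` of the ranges of the latter, and `dim s₁ + dim s₂ ≤ k`. Compressing by an isometry onto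
`s₁` (resp. `s₂`) preserves all the traces, which gives factorizations of `P` and of `Rᵀ` of sizes
`dim s₁` and `dim s₂`.
-/

open Matrix

/-- A psd factorization of size `k` of `M`: symmetric psd matrices `A i`, `B j`
with `M i j = trace (A i * B j)`. -/
def IsPsdFact {m n : Type*} (M : Matrix m n ℝ) {k : ℕ}
    (A : m → Matrix (Fin k) (Fin k) ℝ) (B : n → Matrix (Fin k) (Fin k) ℝ) : Prop :=
  (∀ i, (A i).PosSemidef) ∧ (∀ j, (B j).PosSemidef) ∧ ∀ i j, M i j = (A i * B j).trace

/-- `M` admits a psd factorization of size `k`. -/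
def HasPsdFact {m n : Type*} (M : Matrix m n ℝ) (k : ℕ) : Prop :=
  ∃ (A : m → Matrix (Fin k) (Fin k) ℝ) (B : n → Matrix (Fin k) (Fin k) ℝ), IsPsdFact M A B

/-- The psd rank of `M`: the smallest size of a psd factorization. -/
noncomputable def psdRank {m n : Type*} (M : Matrix m n ℝ) : ℕ :=
  sInf {k | HasPsdFact M k}

open Module

theorem Submodule.IsOrtho.finrank_add_le {𝕜 E : Type*} [RCLike 𝕜] [NormedAddCommGroup E]
    [InnerProductSpace 𝕜 E] [FiniteDimensional 𝕜 E] {U V : Submodule 𝕜 E} (h : U ⟂ V) :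
    finrank 𝕜 U + finrank 𝕜 V ≤ finrank 𝕜 E :=
  U.finrank_add_finrank_orthogonal ▸ Nat.add_le_add_left (finrank_mono h.symm.le) _

section
variable {𝕜 n d : Type*} [RCLike 𝕜] [Fintype n] [DecidableEq n] [Fintype d] [DecidableEq d]

open scoped ComplexOrder MatrixOrder in
theorem Matrix.PosSemidef.mul_eq_zero_of_trace_mul_eq_zero {A B : Matrix n n 𝕜}
    (hA : A.PosSemidef) (hB : B.PosSemidef) (h : (A * B).trace = 0) : A * B = 0 := by
  set S := CFC.sqrt A
  set T := CFC.sqrt B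
  have hS : Sᴴ = S := (CFC.sqrt_nonneg A).isSelfAdjoint
  have hT : Tᴴ = T := (CFC.sqrt_nonneg B).isSelfAdjoint
  have hSS : S * S = A := CFC.sqrt_mul_sqrt_self A hA.nonneg
  have hTT : T * T = B := CFC.sqrt_mul_sqrt_self B hB.nonneg
  -- `tr (A * B) = tr ((S * T)ᴴ * (S * T))`, the squared Frobenius norm of `S * T`
  have hST : S * T = 0 := by
    rw [← trace_conjTranspose_mul_self_eq_zero_iff, ← h, conjTranspose_mul, hS, hT, ← hSS, ← hTT,
      mul_assoc, mul_assoc, trace_mul_comm, mul_assoc, mul_assoc]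
  rw [← hSS, ← hTT, mul_assoc, ← mul_assoc S T, hST, zero_mul, mul_zero]

theorem Matrix.range_toEuclideanLin_isOrtho_of_mul_eq_zero {A B : Matrix n n 𝕜}
    (hA : A.IsHermitian) (hAB : A * B = 0) :
    (toEuclideanLin A).range ⟂ (toEuclideanLin B).range := by
  rw [Submodule.isOrtho_comm, Submodule.isOrtho_iff_le, LinearMap.orthogonal_range,
    ← toEuclideanLin_conjTranspose_eq_adjoint, hA.eq, LinearMap.range_le_ker_iff,
    ← toLpLin_mul_same, hAB, map_zero]

theorem Submodule.exists_conjTranspose_mul_eq_one_and_range_eq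
    (s : Submodule 𝕜 (EuclideanSpace 𝕜 n)) :
    ∃ U : Matrix n (Fin (finrank 𝕜 s)) 𝕜, Uᴴ * U = 1 ∧ (toEuclideanLin U).range = s := by
  let φ := s.subtypeₗᵢ.comp (stdOrthonormalBasis 𝕜 s).repr.symm.toLinearIsometry
  refine ⟨toEuclideanLin.symm φ.toLinearMap, toEuclideanLin.injective ?_, ?_⟩
  · rw [toLpLin_mul_same, toEuclideanLin_conjTranspose_eq_adjoint, LinearEquiv.apply_symm_apply,
      φ.adjoint_comp_self', toLpLin_one]
  · rw [LinearEquiv.apply_symm_apply]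
    exact (LinearMap.range_comp_of_range_eq_top _ (LinearEquiv.range _)).trans s.range_subtype

theorem Matrix.mul_conjTranspose_mul_eq_self {m : Type*} [Fintype m] [DecidableEq m]
    {U : Matrix n d 𝕜} (hU : Uᴴ * U = 1) {A : Matrix n m 𝕜}
    (hA : (toEuclideanLin A).range ≤ (toEuclideanLin U).range) : U * Uᴴ * A = A := by
  refine toEuclideanLin.injective (LinearMap.ext fun v => ?_)
  obtain ⟨w, hw⟩ := hA ⟨v, rfl⟩
  rw [toLpLin_mul_same, LinearMap.comp_apply, ← hw, ← LinearMap.comp_apply, ← toLpLin_mul_same,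
    Matrix.mul_assoc, hU, Matrix.mul_one]

end

section
variable {m n : Type*} {N : Matrix m n ℝ} {k : ℕ}
  {A : m → Matrix (Fin k) (Fin k) ℝ} {B : n → Matrix (Fin k) (Fin k) ℝ}

theorem IsPsdFact.transpose (h : IsPsdFact N A B) : IsPsdFact Nᵀ B A :=
  ⟨h.2.1, h.1, fun j i => by rw [transpose_apply, h.2.2, trace_mul_comm]⟩

theorem HasPsdFact.of_transpose (h : HasPsdFact Nᵀ k) : HasPsdFact N k :=
  let ⟨A, B, hAB⟩ := h
  ⟨B, A, hAB.transpose⟩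

theorem HasPsdFact.psdRank_le (h : HasPsdFact N k) : psdRank N ≤ k :=
  Nat.sInf_le h

theorem IsPsdFact.submatrix {m' n' : Type*} (h : IsPsdFact N A B) (f : m' → m) (g : n' → n) :
    IsPsdFact (N.submatrix f g) (A ∘ f) (B ∘ g) :=
  ⟨fun i => h.1 (f i), fun j => h.2.1 (g j), fun i j => h.2.2 (f i) (g j)⟩

theorem IsPsdFact.compress {d : ℕ} (h : IsPsdFact N A B) (U : Matrix (Fin k) (Fin d) ℝ)
    (hU : ∀ i, U * Uᴴ * A i = A i) :
    IsPsdFact N (fun i => Uᴴ * A i * U) (fun j => Uᴴ * B j * U) := by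
  obtain ⟨hA, hB, hN⟩ := h
  refine ⟨fun i => (hA i).conjTranspose_mul_mul_same U,
    fun j => (hB j).conjTranspose_mul_mul_same U, fun i j => ?_⟩
  have hAU : A i * (U * Uᴴ) = A i := by
    have := congrArg conjTranspose (hU i)
    rwa [conjTranspose_mul, conjTranspose_mul, conjTranspose_conjTranspose,
      (hA i).isHermitian.eq] at this
  calc N i j = (U * Uᴴ * (A i * B j)).trace := by rw [← Matrix.mul_assoc, hU, hN]
    _ = (A i * (U * Uᴴ) * B j * U * Uᴴ).trace := by
      rw [hAU, Matrix.mul_assoc _ U, trace_mul_comm]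
    _ = (Uᴴ * (A i * (U * Uᴴ) * B j * U)).trace := trace_mul_comm _ _
    _ = (Uᴴ * A i * U * (Uᴴ * B j * U)).trace := by simp only [Matrix.mul_assoc]

theorem IsPsdFact.hasPsdFact_finrank_of_range_le (h : IsPsdFact N A B)
    (s : Submodule ℝ (EuclideanSpace ℝ (Fin k))) (hs : ∀ i, (toEuclideanLin (A i)).range ≤ s) :
    HasPsdFact N (finrank ℝ s) := by
  obtain ⟨U, hU, hUs⟩ := s.exists_conjTranspose_mul_eq_one_and_range_eq
  exact ⟨_, _, h.compress U fun i => mul_conjTranspose_mul_eq_self hU ((hs i).trans hUs.ge)⟩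

end

theorem HasPsdFact.exists_add_le_of_fromBlocks {m₁ m₂ n₁ n₂ : Type*} {P : Matrix m₁ n₁ ℝ}
    {Q : Matrix m₂ n₁ ℝ} {R : Matrix m₂ n₂ ℝ} {k : ℕ} (h : HasPsdFact (fromBlocks P 0 Q R) k) :
    ∃ d₁ d₂, d₁ + d₂ ≤ k ∧ HasPsdFact P d₁ ∧ HasPsdFact R d₂ := by
  obtain ⟨A, B, hAB⟩ := h
  let s₁ := ⨆ i, (toEuclideanLin (A (.inl i))).range
  let s₂ := ⨆ j, (toEuclideanLin (B (.inr j))).range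
  have hs : s₁ ⟂ s₂ :=
    Submodule.isOrtho_iSup_left.2 fun i => Submodule.isOrtho_iSup_right.2 fun j =>
      range_toEuclideanLin_isOrtho_of_mul_eq_zero (hAB.1 _).isHermitian <|
        (hAB.1 _).mul_eq_zero_of_trace_mul_eq_zero (hAB.2.1 _) <| by
          simpa using (hAB.2.2 (.inl i) (.inr j)).symm
  refine ⟨_, _, finrank_euclideanSpace_fin (𝕜 := ℝ) ▸ hs.finrank_add_le, ?_, ?_⟩
  · exact (hAB.submatrix Sum.inl Sum.inl).hasPsdFact_finrank_of_range_le s₁ (le_iSup _)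
  · exact HasPsdFact.of_transpose <|
      (hAB.submatrix Sum.inr Sum.inr).transpose.hasPsdFact_finrank_of_range_le s₂ (le_iSup _)

theorem hasPsdFact_card_of_nonneg {m n : Type*} [Fintype n] {M : Matrix m n ℝ}
    (hM : ∀ i j, 0 ≤ M i j) : HasPsdFact M (Fintype.card n) := by
  classical
  let e := Fintype.equivFin n
  refine ⟨fun i => diagonal fun a => M i (e.symm a), fun j => diagonal (Pi.single (e j) 1),
    fun i => PosSemidef.diagonal fun a => hM i _, fun j => PosSemidef.diagonal ?_, fun i j => ?_⟩
  · exact Pi.single_nonneg.2 zero_le_one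
  · simp [diagonal_mul_diagonal, trace_diagonal, Pi.single_apply]

theorem hasPsdFact_psdRank_of_nonneg {m n : Type*} [Fintype n] {M : Matrix m n ℝ}
    (hM : ∀ i j, 0 ≤ M i j) : HasPsdFact M (psdRank M) :=
  Nat.sInf_mem (s := {k | HasPsdFact M k}) ⟨_, hasPsdFact_card_of_nonneg hM⟩

theorem psdRank_blockTriangular {p₁ p₂ q₁ q₂ : ℕ}
    (P : Matrix (Fin p₁) (Fin q₁) ℝ) (Q : Matrix (Fin p₂) (Fin q₁) ℝ)
    (R : Matrix (Fin p₂) (Fin q₂) ℝ)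
    (hP : ∀ i j, 0 ≤ P i j) (hQ : ∀ i j, 0 ≤ Q i j) (hR : ∀ i j, 0 ≤ R i j) :
    psdRank P + psdRank R ≤ psdRank (Matrix.fromBlocks P 0 Q R) := by
  have hM : ∀ i j, 0 ≤ fromBlocks P 0 Q R i j := by
    rintro (i | i) (j | j) <;> simp [hP, hQ, hR]
  obtain ⟨d₁, d₂, hd, hP₁, hR₂⟩ := (hasPsdFact_psdRank_of_nonneg hM).exists_add_le_of_fromBlocks
  exact (add_le_add hP₁.psdRank_le hR₂.psdRank_le).trans hd
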